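/- Let S be a division ring and let a11, a12, a21, a22 ∈ S with a11 ≠ 0 and a21 ≠ 0. Then the two candidate Dieudonné determinants of the 2×2 matrix [[a11,a12],[a21,a22]], namely d1 = a11·a22 − a11·a21·a11^{-1}·a12 and d2 = a21·a11·a21^{-1}·a22 − a21·a12, satisfy d1 = c·d2 for some multiplicative commutator c = a11·a21·a11^{-1}·a21^{-1}; hence they are equal modulo the commutator subgroup [S^×, S^×]. -/

import Mathlib

/-!
With `c = ⁅a11, a21⁆` one has `c · (a21 a11 a21⁻¹) = a11` and `c · a21 = a11 a21 a11⁻¹`, so left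
multiplication by `c` carries `d2` to `d1` term by term; `c` dies in the abelianization of `Sˣ`.
-/

open scoped commutatorElement

theorem Units.mul_sub_mul_conj_eq_commutatorElement_mul {R : Type*} [Ring R] (u v : Rˣ) (x y : R) :
    (u * x - u * v * ↑u⁻¹ * y : R) = ↑⁅u, v⁆ * (v * u * ↑v⁻¹ * x - v * y) := by
  rw [mul_sub]
  congr 1 <;> simp [commutatorElement_def, mul_assoc]

theorem Abelianization.of_commutatorElement_mul {G : Type*} [Group G] (g h k : G) :
    of (⁅g, h⁆ * k) = of k := by
  rw [map_mul, map_commutatorElement,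
    commutatorElement_eq_one_iff_commute.mpr (Commute.all _ _), one_mul]

/-- The two candidate Dieudonné determinants of the 2×2 matrix
`[[a11,a12],[a21,a22]]` over a division ring `S` (with `a11 ≠ 0`, `a21 ≠ 0`),
namely `d1 = a11·a22 − a11·a21·a11⁻¹·a12` and
`d2 = a21·a11·a21⁻¹·a22 − a21·a12`, differ by the multiplicative commutator
`c = a11·a21·a11⁻¹·a21⁻¹`, hence they are equal modulo the commutator subgroup
`[Sˣ, Sˣ]` (i.e. in the abelianization of `Sˣ`). -/
theorem dieudonne_det_two_by_two_well_defined {S : Type*} [DivisionRing S]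
    (a11 a12 a21 a22 : S) (h11 : a11 ≠ 0) (h21 : a21 ≠ 0) :
    (a11 * a22 - a11 * a21 * a11⁻¹ * a12) =
      (a11 * a21 * a11⁻¹ * a21⁻¹) * (a21 * a11 * a21⁻¹ * a22 - a21 * a12) ∧
    (∃ u v : Sˣ, a11 * a21 * a11⁻¹ * a21⁻¹ = (u : S) * v * (↑u⁻¹ : S) * (↑v⁻¹ : S)) ∧
    (∀ u1 u2 : Sˣ, (u1 : S) = a11 * a22 - a11 * a21 * a11⁻¹ * a12 →
      (u2 : S) = a21 * a11 * a21⁻¹ * a22 - a21 * a12 →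
      Abelianization.of u1 = Abelianization.of u2) := by
  set u := Units.mk0 a11 h11
  set v := Units.mk0 a21 h21
  have hc : a11 * a21 * a11⁻¹ * a21⁻¹ = ↑⁅u, v⁆ := by
    simp [u, v, commutatorElement_def]
  have hdet := u.mul_sub_mul_conj_eq_commutatorElement_mul v a22 a12
  simp only [u, v, Units.val_mk0, Units.val_inv_eq_inv_val] at hdet
  refine ⟨hc ▸ hdet, ⟨u, v, hc.trans (by simp [commutatorElement_def])⟩, ?_⟩
  intro u1 u2 h1 h2
  have hu : u1 = ⁅u, v⁆ * u2 := Units.ext (by rw [h1, hdet, Units.val_mul, h2])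
  rw [hu, Abelianization.of_commutatorElement_mul]
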